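/- arXiv:solv-int/9610008 — 4 statements merged into one kernel-verified Lean document; each statement's English description precedes it below -/
import Mathlib

section
/- Let M, N be positive integers, let L₁, A₁ : ℝ → Matrix (Fin M) (Fin M) ℝ and L₂, A₂ : ℝ → Matrix (Fin N) (Fin N) ℝ be time-dependent matrices such that L₁ and L₂ are differentiable and satisfy the Lax equations L₁'(t) = [A₁(t), L₁(t)] and L₂'(t) = [A₂(t), L₂(t)] for all t (i.e. for every t, L₁ has derivative [A₁(t), L₁(t)] at t, and similarly for L₂). Let α₁, α₂ : ℝ be arbitrary constants and define L₃(t) = α₁ (L₁(t) ⊗ L₂(t)) + α₂ (L₁(t) ⊗ I_N + I_M ⊗ L₂(t)) and A₃(t) = A₁(t) ⊗ I_N + I_M ⊗ A₂(t). Then L₃ satisfies the Lax equation L₃'(t) = [A₃(t), L₃(t)] for all t. -/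
/-!
Entrywise, the Kronecker product obeys the Leibniz rule `(L₁ ⊗ L₂)' = L₁' ⊗ L₂ + L₁ ⊗ L₂'`, and by
the mixed-product rule the Kronecker sum `A₁ ⊕ A₂ = A₁ ⊗ I + I ⊗ A₂` acts on it as a derivation:
`[A₁ ⊕ A₂, L₁ ⊗ L₂] = [A₁, L₁] ⊗ L₂ + L₁ ⊗ [A₂, L₂]`. Hence `L₁ ⊗ L₂`, and likewise `L₁ ⊕ L₂`,
form Lax pairs with `A₁ ⊕ A₂`; since the Lax equation is linear in `L` for fixed `A`, so does every
linear combination of the two.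
-/

open Matrix Kronecker

attribute [local instance] LieRing.ofAssociativeRing

namespace Matrix

variable {R l m n p q : Type*}

def kroneckerSum [Semiring R] [DecidableEq m] [DecidableEq n] (A : Matrix m m R)
    (B : Matrix n n R) : Matrix (m × n) (m × n) R :=
  A ⊗ₖ 1 + 1 ⊗ₖ B

theorem sub_kronecker [NonUnitalNonAssocRing R] (A₁ A₂ : Matrix l m R)
    (B : Matrix p q R) : (A₁ - A₂) ⊗ₖ B = A₁ ⊗ₖ B - A₂ ⊗ₖ B :=
  ext fun _ _ => sub_mul _ _ _

theorem kronecker_sub [NonUnitalNonAssocRing R] (A : Matrix l m R)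
    (B₁ B₂ : Matrix p q R) : A ⊗ₖ (B₁ - B₂) = A ⊗ₖ B₁ - A ⊗ₖ B₂ :=
  ext fun _ _ => mul_sub _ _ _

variable [CommRing R] [Fintype m] [DecidableEq m] [Fintype n] [DecidableEq n]

theorem lie_kroneckerSum_kronecker (A L : Matrix m m R) (B K : Matrix n n R) :
    ⁅kroneckerSum A B, L ⊗ₖ K⁆ = ⁅A, L⁆ ⊗ₖ K + L ⊗ₖ ⁅B, K⁆ := by
  simp only [kroneckerSum, Ring.lie_def, add_mul, mul_add, ← mul_kronecker_mul, one_mul,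
    mul_one, sub_kronecker, kronecker_sub]
  abel

theorem lie_kroneckerSum (A L : Matrix m m R) (B K : Matrix n n R) :
    ⁅kroneckerSum A B, kroneckerSum L K⁆ = kroneckerSum ⁅A, L⁆ ⁅B, K⁆ := by
  rw [show kroneckerSum L K = L ⊗ₖ 1 + 1 ⊗ₖ K from rfl, lie_add, lie_kroneckerSum_kronecker,
    lie_kroneckerSum_kronecker]
  simp only [kroneckerSum, Ring.lie_def, mul_one, one_mul, sub_self, kronecker_zero,
    zero_kronecker, add_zero, zero_add]

end Matrix

section EntrywiseDeriv

variable {𝕜 𝔸 m n p q : Type*} [NontriviallyNormedField 𝕜]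

def HasEntrywiseDerivAt [NormedAddCommGroup 𝔸] [NormedSpace 𝕜 𝔸] (F : 𝕜 → Matrix m n 𝔸)
    (F' : Matrix m n 𝔸) (t : 𝕜) : Prop :=
  ∀ i j, HasDerivAt (fun s => F s i j) (F' i j) t

namespace HasEntrywiseDerivAt

variable [NormedRing 𝔸] [NormedAlgebra 𝕜 𝔸] {F G : 𝕜 → Matrix m n 𝔸} {F' G' : Matrix m n 𝔸}
  {t : 𝕜}

theorem const (C : Matrix m n 𝔸) (t : 𝕜) : HasEntrywiseDerivAt (fun _ => C) 0 t :=
  fun i j => hasDerivAt_const t (C i j)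

theorem add (hF : HasEntrywiseDerivAt F F' t) (hG : HasEntrywiseDerivAt G G' t) :
    HasEntrywiseDerivAt (fun s => F s + G s) (F' + G') t :=
  fun i j => (hF i j).add (hG i j)

theorem const_smul (c : 𝕜) (hF : HasEntrywiseDerivAt F F' t) :
    HasEntrywiseDerivAt (fun s => c • F s) (c • F') t :=
  fun i j => (hF i j).const_smul c

theorem kronecker {P : 𝕜 → Matrix p q 𝔸} {P' : Matrix p q 𝔸} (hF : HasEntrywiseDerivAt F F' t)
    (hP : HasEntrywiseDerivAt P P' t) :
    HasEntrywiseDerivAt (fun s => F s ⊗ₖ P s) (F' ⊗ₖ P t + F t ⊗ₖ P') t :=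
  fun i j => (hF i.1 j.1).mul (hP i.2 j.2)

theorem kroneckerSum [DecidableEq m] [DecidableEq p] {F : 𝕜 → Matrix m m 𝔸} {F' : Matrix m m 𝔸}
    {P : 𝕜 → Matrix p p 𝔸} {P' : Matrix p p 𝔸} (hF : HasEntrywiseDerivAt F F' t)
    (hP : HasEntrywiseDerivAt P P' t) :
    HasEntrywiseDerivAt (fun s => kroneckerSum (F s) (P s)) (kroneckerSum F' P') t := by
  have h := (hF.kronecker (const 1 t)).add ((const 1 t).kronecker hP)
  simp only [kronecker_zero, zero_kronecker, add_zero, zero_add] at h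
  exact h

end HasEntrywiseDerivAt

end EntrywiseDeriv

section LaxPair

variable {𝕜 𝔸 m n : Type*} [NontriviallyNormedField 𝕜] [NormedCommRing 𝔸] [NormedAlgebra 𝕜 𝔸]
  [Fintype m] [DecidableEq m] [Fintype n] [DecidableEq n]

def IsLaxPairAt (L A : 𝕜 → Matrix n n 𝔸) (t : 𝕜) : Prop :=
  HasEntrywiseDerivAt L ⁅A t, L t⁆ t

namespace IsLaxPairAt

variable {L K A : 𝕜 → Matrix n n 𝔸} {t : 𝕜}

theorem smul_add_smul (a b : 𝕜) (hL : IsLaxPairAt L A t) (hK : IsLaxPairAt K A t) :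
    IsLaxPairAt (fun s => a • L s + b • K s) A t := by
  unfold IsLaxPairAt
  rw [lie_add, lie_smul, lie_smul]
  exact (hL.const_smul a).add (hK.const_smul b)

variable {L₁ A₁ : 𝕜 → Matrix m m 𝔸} {L₂ A₂ : 𝕜 → Matrix n n 𝔸}

theorem kronecker (h₁ : IsLaxPairAt L₁ A₁ t) (h₂ : IsLaxPairAt L₂ A₂ t) :
    IsLaxPairAt (fun s => L₁ s ⊗ₖ L₂ s) (fun s => kroneckerSum (A₁ s) (A₂ s)) t := by
  unfold IsLaxPairAt
  rw [lie_kroneckerSum_kronecker]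
  exact HasEntrywiseDerivAt.kronecker h₁ h₂

theorem kroneckerSum (h₁ : IsLaxPairAt L₁ A₁ t) (h₂ : IsLaxPairAt L₂ A₂ t) :
    IsLaxPairAt (fun s => kroneckerSum (L₁ s) (L₂ s)) (fun s => kroneckerSum (A₁ s) (A₂ s)) t := by
  unfold IsLaxPairAt
  rw [lie_kroneckerSum]
  exact HasEntrywiseDerivAt.kroneckerSum h₁ h₂

end IsLaxPairAt

end LaxPair

theorem kronecker_lax_representation_general
    (M N : ℕ)
    (L₁ A₁ : ℝ → Matrix (Fin M) (Fin M) ℝ)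
    (L₂ A₂ : ℝ → Matrix (Fin N) (Fin N) ℝ)
    (h₁ : ∀ t : ℝ, ∀ i j : Fin M,
      HasDerivAt (fun s => L₁ s i j) ((A₁ t * L₁ t - L₁ t * A₁ t) i j) t)
    (h₂ : ∀ t : ℝ, ∀ i j : Fin N,
      HasDerivAt (fun s => L₂ s i j) ((A₂ t * L₂ t - L₂ t * A₂ t) i j) t)
    (α₁ α₂ : ℝ)
    (L₃ A₃ : ℝ → Matrix (Fin M × Fin N) (Fin M × Fin N) ℝ)
    (hL₃ : ∀ t : ℝ, L₃ t =
      α₁ • (L₁ t ⊗ₖ L₂ t) +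
      α₂ • (L₁ t ⊗ₖ (1 : Matrix (Fin N) (Fin N) ℝ) +
            (1 : Matrix (Fin M) (Fin M) ℝ) ⊗ₖ L₂ t))
    (hA₃ : ∀ t : ℝ, A₃ t =
      A₁ t ⊗ₖ (1 : Matrix (Fin N) (Fin N) ℝ) +
      (1 : Matrix (Fin M) (Fin M) ℝ) ⊗ₖ A₂ t) :
    ∀ t : ℝ, ∀ i j : Fin M × Fin N,
      HasDerivAt (fun s => L₃ s i j) ((A₃ t * L₃ t - L₃ t * A₃ t) i j) t := by
  intro t
  have h₁ : IsLaxPairAt L₁ A₁ t := h₁ t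
  have h₂ : IsLaxPairAt L₂ A₂ t := h₂ t
  obtain rfl : L₃ = fun s => α₁ • (L₁ s ⊗ₖ L₂ s) + α₂ • kroneckerSum (L₁ s) (L₂ s) := funext hL₃
  obtain rfl : A₃ = fun s => kroneckerSum (A₁ s) (A₂ s) := funext hA₃
  exact (h₁.kronecker h₂).smul_add_smul α₁ α₂ (h₁.kroneckerSum h₂)

/-- **Theorem 1 (Lax representation via Kronecker product).**
If `L₁' = [A₁, L₁]` and `L₂' = [A₂, L₂]`, then
`L₃ = α₁ (L₁ ⊗ L₂) + α₂ (L₁ ⊗ I_N + I_M ⊗ L₂)` satisfies `L₃' = [A₃, L₃]`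
with `A₃ = A₁ ⊗ I_N + I_M ⊗ A₂`.  Derivatives are taken entrywise. -/
theorem kronecker_lax_representation
    (M N : ℕ) (hM : 0 < M) (hN : 0 < N)
    (L₁ A₁ : ℝ → Matrix (Fin M) (Fin M) ℝ)
    (L₂ A₂ : ℝ → Matrix (Fin N) (Fin N) ℝ)
    (h₁ : ∀ t : ℝ, ∀ i j : Fin M,
      HasDerivAt (fun s => L₁ s i j) ((A₁ t * L₁ t - L₁ t * A₁ t) i j) t)
    (h₂ : ∀ t : ℝ, ∀ i j : Fin N,
      HasDerivAt (fun s => L₂ s i j) ((A₂ t * L₂ t - L₂ t * A₂ t) i j) t)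
    (α₁ α₂ : ℝ)
    (L₃ A₃ : ℝ → Matrix (Fin M × Fin N) (Fin M × Fin N) ℝ)
    (hL₃ : ∀ t : ℝ, L₃ t =
      α₁ • (L₁ t ⊗ₖ L₂ t) +
      α₂ • (L₁ t ⊗ₖ (1 : Matrix (Fin N) (Fin N) ℝ) +
            (1 : Matrix (Fin M) (Fin M) ℝ) ⊗ₖ L₂ t))
    (hA₃ : ∀ t : ℝ, A₃ t =
      A₁ t ⊗ₖ (1 : Matrix (Fin N) (Fin N) ℝ) +
      (1 : Matrix (Fin M) (Fin M) ℝ) ⊗ₖ A₂ t) :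
    ∀ t : ℝ, ∀ i j : Fin M × Fin N,
      HasDerivAt (fun s => L₃ s i j) ((A₃ t * L₃ t - L₃ t * A₃ t) i j) t :=
  kronecker_lax_representation_general M N L₁ A₁ L₂ A₂ h₁ h₂ α₁ α₂ L₃ A₃ hL₃ hA₃
end

section
/- Let M, N be positive integers, let U₁, V₁ : ℝ → ℝ → Matrix (Fin M) (Fin M) ℝ and U₂, V₂ : ℝ → ℝ → Matrix (Fin N) (Fin N) ℝ be matrix-valued functions of (x, t), with U₁, U₂ differentiable in t and V₁, V₂ differentiable in x, satisfying the continuous zero curvature equations ∂_t U₁ − ∂_x V₁ + [U₁, V₁] = 0 and ∂_t U₂ − ∂_x V₂ + [U₂, V₂] = 0 at every point (x, t). Define U₃(x,t) = U₁(x,t) ⊗ I_N + I_M ⊗ U₂(x,t) and V₃(x,t) = V₁(x,t) ⊗ I_N + I_M ⊗ V₂(x,t). Then ∂_t U₃ − ∂_x V₃ + [U₃, V₃] = 0 at every point (x, t). -/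
open Matrix Kronecker


private lemma sub_kron {l m n p : Type*} (A B : Matrix l m ℝ) (C : Matrix n p ℝ) :
    (A - B) ⊗ₖ C = A ⊗ₖ C - B ⊗ₖ C := by
  ext ⟨i,k⟩ ⟨j,l⟩; simp [Matrix.kroneckerMap_apply, sub_mul]

private lemma kron_sub {l m n p : Type*} (A : Matrix l m ℝ) (B C : Matrix n p ℝ) :
    A ⊗ₖ (B - C) = A ⊗ₖ B - A ⊗ₖ C := by
  ext ⟨i,k⟩ ⟨j,l⟩; simp [Matrix.kroneckerMap_apply, mul_sub]

private lemma neg_kron {l m n p : Type*} (A : Matrix l m ℝ) (C : Matrix n p ℝ) :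
    (-A) ⊗ₖ C = -(A ⊗ₖ C) := by
  ext ⟨i,k⟩ ⟨j,l⟩; simp [Matrix.kroneckerMap_apply]

private lemma kron_neg {l m n p : Type*} (A : Matrix l m ℝ) (C : Matrix n p ℝ) :
    A ⊗ₖ (-C) = -(A ⊗ₖ C) := by
  ext ⟨i,k⟩ ⟨j,l⟩; simp [Matrix.kroneckerMap_apply]

/-- **Theorem 2 (Continuous zero curvature representation via Kronecker product).**
If `∂ₜU₁ - ∂ₓV₁ + [U₁,V₁] = 0` and `∂ₜU₂ - ∂ₓV₂ + [U₂,V₂] = 0`, then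
`U₃ = U₁ ⊗ I_N + I_M ⊗ U₂`, `V₃ = V₁ ⊗ I_N + I_M ⊗ V₂` satisfy
`∂ₜU₃ - ∂ₓV₃ + [U₃,V₃] = 0`.  Partial derivatives are taken entrywise;
the functions take arguments `(x, t)`. -/
theorem kronecker_continuous_zero_curvature
    (M N : ℕ) (hM : 0 < M) (hN : 0 < N)
    (U₁ V₁ Ut₁ Vx₁ : ℝ → ℝ → Matrix (Fin M) (Fin M) ℝ)
    (U₂ V₂ Ut₂ Vx₂ : ℝ → ℝ → Matrix (Fin N) (Fin N) ℝ)
    -- `U₁, U₂` are entrywise differentiable in `t` with derivatives `Ut₁, Ut₂`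
    (hUt₁ : ∀ (x t : ℝ) (i j : Fin M),
      HasDerivAt (fun s => U₁ x s i j) (Ut₁ x t i j) t)
    (hUt₂ : ∀ (x t : ℝ) (i j : Fin N),
      HasDerivAt (fun s => U₂ x s i j) (Ut₂ x t i j) t)
    -- `V₁, V₂` are entrywise differentiable in `x` with derivatives `Vx₁, Vx₂`
    (hVx₁ : ∀ (x t : ℝ) (i j : Fin M),
      HasDerivAt (fun y => V₁ y t i j) (Vx₁ x t i j) x)
    (hVx₂ : ∀ (x t : ℝ) (i j : Fin N),
      HasDerivAt (fun y => V₂ y t i j) (Vx₂ x t i j) x)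
    -- the two continuous zero curvature equations
    (hzc₁ : ∀ x t : ℝ,
      Ut₁ x t - Vx₁ x t + (U₁ x t * V₁ x t - V₁ x t * U₁ x t) = 0)
    (hzc₂ : ∀ x t : ℝ,
      Ut₂ x t - Vx₂ x t + (U₂ x t * V₂ x t - V₂ x t * U₂ x t) = 0)
    (U₃ V₃ : ℝ → ℝ → Matrix (Fin M × Fin N) (Fin M × Fin N) ℝ)
    (hU₃ : ∀ x t : ℝ, U₃ x t =
      U₁ x t ⊗ₖ (1 : Matrix (Fin N) (Fin N) ℝ) +
      (1 : Matrix (Fin M) (Fin M) ℝ) ⊗ₖ U₂ x t)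
    (hV₃ : ∀ x t : ℝ, V₃ x t =
      V₁ x t ⊗ₖ (1 : Matrix (Fin N) (Fin N) ℝ) +
      (1 : Matrix (Fin M) (Fin M) ℝ) ⊗ₖ V₂ x t) :
    ∀ x t : ℝ, ∃ Ut₃ Vx₃ : Matrix (Fin M × Fin N) (Fin M × Fin N) ℝ,
      (∀ i j : Fin M × Fin N, HasDerivAt (fun s => U₃ x s i j) (Ut₃ i j) t) ∧
      (∀ i j : Fin M × Fin N, HasDerivAt (fun y => V₃ y t i j) (Vx₃ i j) x) ∧
      Ut₃ - Vx₃ + (U₃ x t * V₃ x t - V₃ x t * U₃ x t) = 0 := by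
  intro x t
  refine ⟨Ut₁ x t ⊗ₖ (1 : Matrix (Fin N) (Fin N) ℝ) +
      (1 : Matrix (Fin M) (Fin M) ℝ) ⊗ₖ Ut₂ x t,
      Vx₁ x t ⊗ₖ (1 : Matrix (Fin N) (Fin N) ℝ) +
      (1 : Matrix (Fin M) (Fin M) ℝ) ⊗ₖ Vx₂ x t, ?_, ?_, ?_⟩
  · intro i j
    have : (fun s => U₃ x s i j) =
        fun s => U₁ x s i.1 j.1 * (1 : Matrix (Fin N) (Fin N) ℝ) i.2 j.2 +
          (1 : Matrix (Fin M) (Fin M) ℝ) i.1 j.1 * U₂ x s i.2 j.2 := by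
      funext s; rw [hU₃]; rfl
    rw [this]
    exact ((hUt₁ x t i.1 j.1).mul_const _).add ((hUt₂ x t i.2 j.2).const_mul _)
  · intro i j
    have : (fun y => V₃ y t i j) =
        fun y => V₁ y t i.1 j.1 * (1 : Matrix (Fin N) (Fin N) ℝ) i.2 j.2 +
          (1 : Matrix (Fin M) (Fin M) ℝ) i.1 j.1 * V₂ y t i.2 j.2 := by
      funext y; rw [hV₃]; rfl
    rw [this]
    exact ((hVx₁ x t i.1 j.1).mul_const _).add ((hVx₂ x t i.2 j.2).const_mul _)
  · rw [hU₃, hV₃]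
    have h1 := hzc₁ x t
    have h2 := hzc₂ x t
    have e1 : (Ut₁ x t - Vx₁ x t) ⊗ₖ (1 : Matrix (Fin N) (Fin N) ℝ) =
        -((U₁ x t * V₁ x t - V₁ x t * U₁ x t) ⊗ₖ (1 : Matrix (Fin N) (Fin N) ℝ)) := by
      rw [eq_neg_of_add_eq_zero_left h1, neg_kron]
    have e2 : (1 : Matrix (Fin M) (Fin M) ℝ) ⊗ₖ (Ut₂ x t - Vx₂ x t) =
        -((1 : Matrix (Fin M) (Fin M) ℝ) ⊗ₖ (U₂ x t * V₂ x t - V₂ x t * U₂ x t)) := by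
      rw [eq_neg_of_add_eq_zero_left h2, kron_neg]
    have key : (Ut₁ x t ⊗ₖ (1 : Matrix (Fin N) (Fin N) ℝ) +
        (1 : Matrix (Fin M) (Fin M) ℝ) ⊗ₖ Ut₂ x t) -
        (Vx₁ x t ⊗ₖ (1 : Matrix (Fin N) (Fin N) ℝ) +
        (1 : Matrix (Fin M) (Fin M) ℝ) ⊗ₖ Vx₂ x t) =
        (Ut₁ x t - Vx₁ x t) ⊗ₖ (1 : Matrix (Fin N) (Fin N) ℝ) +
        (1 : Matrix (Fin M) (Fin M) ℝ) ⊗ₖ (Ut₂ x t - Vx₂ x t) := by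
      rw [sub_kron, kron_sub]; abel
    rw [key, e1, e2]
    simp only [Matrix.add_mul, Matrix.mul_add, ← Matrix.mul_kronecker_mul,
      Matrix.one_mul, Matrix.mul_one, mul_one, one_mul]
    simp only [sub_kron, kron_sub]
    abel
end

section
/- Let p, q : ℝ → ℝ → ℝ be functions of (x, t) that are twice differentiable in x and differentiable in t, and for λ ∈ ℝ define the 2×2 matrices U(x,t) = [[−λ, p],[q, λ]] and V(x,t) = [[−λ² + pq/2, λp − p_x/2],[λq + q_x/2, λ² − pq/2]]. Then the continuous zero curvature equation ∂_t U − ∂_x V + [U, V] = 0 holds at every point (x,t) for every λ ∈ ℝ if and only if p and q satisfy the coupled nonlinear Schrödinger-type system p_t = −½ p_{xx} + p²q and q_t = ½ q_{xx} − pq² at every point (x,t). -/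
open Matrix

/-- **Example 2 (AKNS / nonlinear Schrödinger-type system).**  The 2×2 pair
`U = [[-λ, p],[q, λ]]`,
`V = [[-λ² + pq/2, λp - pₓ/2],[λq + qₓ/2, λ² - pq/2]]`
satisfies the continuous zero curvature equation `∂ₜU - ∂ₓV + [U, V] = 0`
for every real `λ` and at every point `(x, t)` if and only if
`pₜ = -½ pₓₓ + p²q` and `qₜ = ½ qₓₓ - pq²` everywhere.
Arguments are `(x, t)`; partial derivatives are taken entrywise via `deriv`. -/
theorem nls_zero_curvature_representation
    (p q : ℝ → ℝ → ℝ)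
    -- twice differentiable in x
    (hpx : ∀ t : ℝ, Differentiable ℝ (fun x => p x t))
    (hpxx : ∀ t : ℝ, Differentiable ℝ (deriv (fun x => p x t)))
    (hqx : ∀ t : ℝ, Differentiable ℝ (fun x => q x t))
    (hqxx : ∀ t : ℝ, Differentiable ℝ (deriv (fun x => q x t)))
    -- differentiable in t
    (hpt : ∀ x : ℝ, Differentiable ℝ (fun t => p x t))
    (hqt : ∀ x : ℝ, Differentiable ℝ (fun t => q x t))
    (U V : ℝ → ℝ → ℝ → Matrix (Fin 2) (Fin 2) ℝ)
    (hU : ∀ l x t : ℝ, U l x t = !![-l, p x t; q x t, l])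
    (hV : ∀ l x t : ℝ, V l x t =
      !![-l ^ 2 + p x t * q x t / 2, l * p x t - deriv (fun y => p y t) x / 2;
         l * q x t + deriv (fun y => q y t) x / 2, l ^ 2 - p x t * q x t / 2]) :
    (∀ l x t : ℝ,
        (Matrix.of fun i j => deriv (fun s => U l x s i j) t) -
            (Matrix.of fun i j => deriv (fun y => V l y t i j) x) +
          (U l x t * V l x t - V l x t * U l x t) = 0) ↔
      (∀ x t : ℝ,
        deriv (fun s => p x s) t =
          -(1 / 2) * deriv (deriv (fun y => p y t)) x + (p x t) ^ 2 * q x t ∧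
        deriv (fun s => q x s) t =
          (1 / 2) * deriv (deriv (fun y => q y t)) x - p x t * (q x t) ^ 2) := by
  have key : ∀ l x t : ℝ,
      (Matrix.of fun i j => deriv (fun s => U l x s i j) t) -
          (Matrix.of fun i j => deriv (fun y => V l y t i j) x) +
        (U l x t * V l x t - V l x t * U l x t) =
      !![0, deriv (fun s => p x s) t -
            (-(1 / 2) * deriv (deriv (fun y => p y t)) x + (p x t) ^ 2 * q x t);
         deriv (fun s => q x s) t -
            ((1 / 2) * deriv (deriv (fun y => q y t)) x - p x t * (q x t) ^ 2), 0] := by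
    intro l x t
    have ht00 : deriv (fun s => U l x s 0 0) t = 0 := by
      have e : (fun s => U l x s 0 0) = fun _ : ℝ => -l := by funext s; simp [hU]
      rw [e, deriv_const]
    have ht01 : deriv (fun s => U l x s 0 1) t = deriv (fun s => p x s) t := by
      have e : (fun s => U l x s 0 1) = fun s => p x s := by funext s; simp [hU]
      rw [e]
    have ht10 : deriv (fun s => U l x s 1 0) t = deriv (fun s => q x s) t := by
      have e : (fun s => U l x s 1 0) = fun s => q x s := by funext s; simp [hU]
      rw [e]
    have ht11 : deriv (fun s => U l x s 1 1) t = 0 := by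
      have e : (fun s => U l x s 1 1) = fun _ : ℝ => l := by funext s; simp [hU]
      rw [e, deriv_const]
    have hx00 : deriv (fun y => V l y t 0 0) x =
        (deriv (fun y => p y t) x * q x t + p x t * deriv (fun y => q y t) x) / 2 := by
      have e : (fun y => V l y t 0 0) = fun y => -l ^ 2 + p y t * q y t / 2 := by
        funext y; simp [hV]
      rw [e]
      exact ((((hpx t x).hasDerivAt.mul (hqx t x).hasDerivAt).div_const 2).const_add
        (-l ^ 2)).deriv
    have hx01 : deriv (fun y => V l y t 0 1) x =
        l * deriv (fun y => p y t) x - deriv (deriv (fun y => p y t)) x / 2 := by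
      have e : (fun y => V l y t 0 1) =
          fun y => l * p y t - deriv (fun z => p z t) y / 2 := by
        funext y; simp [hV]
      rw [e]
      exact (((hpx t x).hasDerivAt.const_mul l).sub
        ((hpxx t x).hasDerivAt.div_const 2)).deriv
    have hx10 : deriv (fun y => V l y t 1 0) x =
        l * deriv (fun y => q y t) x + deriv (deriv (fun y => q y t)) x / 2 := by
      have e : (fun y => V l y t 1 0) =
          fun y => l * q y t + deriv (fun z => q z t) y / 2 := by
        funext y; simp [hV]
      rw [e]
      exact (((hqx t x).hasDerivAt.const_mul l).add
        ((hqxx t x).hasDerivAt.div_const 2)).deriv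
    have hx11 : deriv (fun y => V l y t 1 1) x =
        -((deriv (fun y => p y t) x * q x t + p x t * deriv (fun y => q y t) x) / 2) := by
      have e : (fun y => V l y t 1 1) = fun y => l ^ 2 - p y t * q y t / 2 := by
        funext y; simp [hV]
      rw [e]
      exact (((hpx t x).hasDerivAt.mul (hqx t x).hasDerivAt).div_const 2).const_sub
        (l ^ 2) |>.deriv
    ext i j
    fin_cases i <;> fin_cases j <;>
      simp only [Matrix.add_apply, Matrix.sub_apply, Matrix.of_apply, Fin.zero_eta,
        Fin.mk_one, Matrix.mul_apply, Fin.sum_univ_two, Matrix.cons_val',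
        Matrix.cons_val_zero, Matrix.cons_val_one, Matrix.head_cons,
        Matrix.empty_val', Matrix.cons_val_fin_one, Matrix.head_fin_const]
    · rw [ht00, hx00, hU, hV]
      simp only [Matrix.cons_val', Matrix.cons_val_zero, Matrix.cons_val_one,
        Matrix.head_cons, Matrix.empty_val', Matrix.cons_val_fin_one,
        Matrix.head_fin_const, Matrix.of_apply]
      ring
    · rw [ht01, hx01, hU, hV]
      simp only [Matrix.cons_val', Matrix.cons_val_zero, Matrix.cons_val_one,
        Matrix.head_cons, Matrix.empty_val', Matrix.cons_val_fin_one,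
        Matrix.head_fin_const, Matrix.of_apply]
      ring
    · rw [ht10, hx10, hU, hV]
      simp only [Matrix.cons_val', Matrix.cons_val_zero, Matrix.cons_val_one,
        Matrix.head_cons, Matrix.empty_val', Matrix.cons_val_fin_one,
        Matrix.head_fin_const, Matrix.of_apply]
      ring
    · rw [ht11, hx11, hU, hV]
      simp only [Matrix.cons_val', Matrix.cons_val_zero, Matrix.cons_val_one,
        Matrix.head_cons, Matrix.empty_val', Matrix.cons_val_fin_one,
        Matrix.head_fin_const, Matrix.of_apply]
      ring
  constructor
  · intro h x t
    have hM := (key 0 x t).symm.trans (h 0 x t)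
    constructor
    · have h01 : (!![0, deriv (fun s => p x s) t -
            (-(1 / 2) * deriv (deriv (fun y => p y t)) x + (p x t) ^ 2 * q x t);
         deriv (fun s => q x s) t -
            ((1 / 2) * deriv (deriv (fun y => q y t)) x - p x t * (q x t) ^ 2), 0] :
            Matrix (Fin 2) (Fin 2) ℝ) 0 1 = (0 : Matrix (Fin 2) (Fin 2) ℝ) 0 1 := by
        rw [hM]
      simp at h01
      linarith
    · have h10 : (!![0, deriv (fun s => p x s) t -
            (-(1 / 2) * deriv (deriv (fun y => p y t)) x + (p x t) ^ 2 * q x t);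
         deriv (fun s => q x s) t -
            ((1 / 2) * deriv (deriv (fun y => q y t)) x - p x t * (q x t) ^ 2), 0] :
            Matrix (Fin 2) (Fin 2) ℝ) 1 0 = (0 : Matrix (Fin 2) (Fin 2) ℝ) 1 0 := by
        rw [hM]
      simp at h10
      linarith
  · intro h l x t
    rw [key l x t]
    ext i j
    fin_cases i <;> fin_cases j <;> simp [(h x t).1, (h x t).2]
end

section
/- Let u : ℤ → ℝ → ℝ be differentiable in t at every lattice site, let λ be a nonzero real number, and define the 2×2 lattice matrices U(n,t) = [[1, u(n,t)],[λ⁻¹, 0]] and V(n,t) = [[λ/2 − u(n,t), λ·u(n,t)],[1, −λ/2 − u(n−1,t)]]. Then the discrete zero curvature equation ∂_t U(n,t) = V(n+1,t) U(n,t) − U(n,t) V(n,t) holds for all n and t if and only if u satisfies the Bogoyavlensky lattice ∂_t u(n,t) = u(n,t)(u(n−1,t) − u(n+1,t)) for all n and t. -/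
/-!
The commutator-type expression `V(n+1) U(n) - U(n) V(n)` has a single nonzero entry,
`u(n) (u(n-1) - u(n+1))`, in position `(0, 1)`; the other entries vanish because `λ λ⁻¹ = 1`.
Since `U(n)` carries `u(n)` in that same position and is constant elsewhere, the zero curvature
equation reduces entry by entry to the Bogoyavlensky lattice.
-/

open Matrix

theorem bogoyavlensky_zeroCurvature_rhs {l : ℝ} (hl : l ≠ 0) (a b c : ℝ) :
    !![l / 2 - c, l * c; 1, -(l / 2) - a] * !![1, a; l⁻¹, 0]
      - !![1, a; l⁻¹, 0] * !![l / 2 - a, l * a; 1, -(l / 2) - b]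
      = !![0, a * (b - c); 0, 0] := by
  rw [mul_fin_two, mul_fin_two, of_sub_of]
  simp only [cons_sub_cons, empty_sub_empty]
  congr <;> field_simp <;> ring

theorem hasDerivAt_entries_iff_of_const {f : ℝ → ℝ} {d t : ℝ} (p q r : ℝ) :
    (∀ i j : Fin 2, HasDerivAt (fun s => !![p, f s; q, r] i j) (!![0, d; 0, 0] i j) t) ↔
      HasDerivAt f d t := by
  refine ⟨fun h => by simpa using h 0 1, fun h i j => ?_⟩
  fin_cases i <;> fin_cases j <;> simp [h, hasDerivAt_const]

theorem bogoyavlensky_discrete_zero_curvature_general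
    (u : ℤ → ℝ → ℝ)
    (l : ℝ) (hl : l ≠ 0)
    (U V : ℤ → ℝ → Matrix (Fin 2) (Fin 2) ℝ)
    (hU : ∀ (n : ℤ) (t : ℝ), U n t = !![1, u n t; l⁻¹, 0])
    (hV : ∀ (n : ℤ) (t : ℝ), V n t =
      !![l / 2 - u n t, l * u n t; 1, -(l / 2) - u (n - 1) t]) :
    (∀ (n : ℤ) (t : ℝ) (i j : Fin 2),
        HasDerivAt (fun s => U n s i j)
          ((V (n + 1) t * U n t - U n t * V n t) i j) t) ↔
      (∀ (n : ℤ) (t : ℝ),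
        HasDerivAt (fun s => u n s) (u n t * (u (n - 1) t - u (n + 1) t)) t) := by
  have hrhs : ∀ n t, V (n + 1) t * U n t - U n t * V n t
      = !![0, u n t * (u (n - 1) t - u (n + 1) t); 0, 0] := by
    intro n t
    rw [hU, hV, hV, add_sub_cancel_right]
    exact bogoyavlensky_zeroCurvature_rhs hl _ _ _
  simp only [hrhs]
  simp only [hU]
  exact forall_congr' fun n => forall_congr' fun t => hasDerivAt_entries_iff_of_const 1 l⁻¹ 0

/-- **Example 3 (Bogoyavlensky lattice).**  For `λ ≠ 0`, the 2×2 lattice pair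
`U(n) = [[1, u(n)],[λ⁻¹, 0]]`,
`V(n) = [[λ/2 - u(n), λ u(n)],[1, -λ/2 - u(n-1)]]`
satisfies the discrete zero curvature equation
`∂ₜU(n) = V(n+1)U(n) - U(n)V(n)` for all `n, t` if and only if `u` solves the
Bogoyavlensky lattice `uₜ(n) = u(n)(u(n-1) - u(n+1))`. -/
theorem bogoyavlensky_discrete_zero_curvature
    (u : ℤ → ℝ → ℝ)
    (hu : ∀ n : ℤ, Differentiable ℝ (u n))
    (l : ℝ) (hl : l ≠ 0)
    (U V : ℤ → ℝ → Matrix (Fin 2) (Fin 2) ℝ)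
    (hU : ∀ (n : ℤ) (t : ℝ), U n t = !![1, u n t; l⁻¹, 0])
    (hV : ∀ (n : ℤ) (t : ℝ), V n t =
      !![l / 2 - u n t, l * u n t; 1, -(l / 2) - u (n - 1) t]) :
    (∀ (n : ℤ) (t : ℝ) (i j : Fin 2),
        HasDerivAt (fun s => U n s i j)
          ((V (n + 1) t * U n t - U n t * V n t) i j) t) ↔
      (∀ (n : ℤ) (t : ℝ),
        HasDerivAt (fun s => u n s) (u n t * (u (n - 1) t - u (n + 1) t)) t) :=
  bogoyavlensky_discrete_zero_curvature_general u l hl U V hU hV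
end
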